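/- arXiv:2504.20161 — 8 statements merged into one kernel-verified Lean document; each statement's English description precedes it below -/
import Mathlib

section
/- Let n ≥ 1 and let x, y ∈ ℝ^n be two vectors whose entries are sorted in nonincreasing order (x_1 ≥ x_2 ≥ … ≥ x_n and y_1 ≥ y_2 ≥ … ≥ y_n). Then for every permutation σ of {1,…,n} it holds that Σ_{i=1}^n min(x_i, y_i) ≥ Σ_{i=1}^n min(x_i, y_{σ(i)}). -/
/-!
Layer cake: for `a, b ≥ m`, `min a b - m` is the length of `{t > m | t < a ∧ t < b}`, i.e. the
integral over `t > m` of `1[t < a] * 1[t < b]`. For each threshold `t` the indicator vectors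
`1[t < f i]` and `1[t < g i]` still monovary, so the classical rearrangement inequality for
products applies to them; integrating over `t` gives the inequality for minima.
-/

open Finset MeasureTheory Set

theorem Monovary.comp_monotone {ι α β γ δ : Type*} [Preorder α] [LinearOrder β] [Preorder γ]
    [LinearOrder δ] {f : ι → α} {g : ι → β} {f' : α → γ} {g' : β → δ}
    (h : Monovary f g) (hf : Monotone f') (hg : Monotone g') : Monovary (f' ∘ f) (g' ∘ g) :=
  fun _ _ hij => hf <| h <| hg.reflect_lt hij

theorem monotone_indicator_Iio_one (t : ℝ) :
    Monotone fun a : ℝ => (Iio a).indicator (1 : ℝ → ℝ) t :=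
  fun _ _ hab => indicator_le_indicator_of_subset (Iio_subset_Iio hab) (fun _ => zero_le_one) t

theorem indicator_Iio_one_mul (a b t : ℝ) :
    (Iio a).indicator (1 : ℝ → ℝ) t * (Iio b).indicator 1 t = (Iio (min a b)).indicator 1 t := by
  rw [← Pi.mul_apply, ← inter_indicator_one, Iio_inter_Iio]

theorem integrableOn_indicator_Iio_one_mul (a b m : ℝ) :
    IntegrableOn (fun t => (Iio a).indicator (1 : ℝ → ℝ) t * (Iio b).indicator 1 t) (Ioi m) := by
  simp_rw [indicator_Iio_one_mul]
  rw [IntegrableOn, integrable_indicator_iff measurableSet_Iio, IntegrableOn,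
    Measure.restrict_restrict measurableSet_Iio, Iio_inter_Ioi]
  exact integrableOn_const measure_Ioo_lt_top.ne

theorem min_sub_eq_setIntegral_indicator_mul {m a b : ℝ} (ha : m ≤ a) (hb : m ≤ b) :
    min a b - m = ∫ t in Ioi m, (Iio a).indicator (1 : ℝ → ℝ) t * (Iio b).indicator 1 t := by
  simp_rw [indicator_Iio_one_mul]
  rw [integral_indicator_one measurableSet_Iio, measureReal_restrict_apply measurableSet_Iio,
    Iio_inter_Ioi, Real.volume_real_Ioo_of_le (le_min ha hb)]

theorem Monovary.sum_min_comp_perm_le_sum_min {ι : Type*} [Fintype ι] {f g : ι → ℝ}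
    (hfg : Monovary f g) (σ : Equiv.Perm ι) :
    ∑ i, min (f i) (g (σ i)) ≤ ∑ i, min (f i) (g i) := by
  obtain ⟨m, hm⟩ : BddBelow (range f ∪ range g) :=
    ((finite_range f).union (finite_range g)).bddBelow
  have layer_cake (τ : Equiv.Perm ι) : ∑ i, (min (f i) (g (τ i)) - m) =
      ∫ t in Ioi m, ∑ i, (Iio (f i)).indicator 1 t * (Iio (g (τ i))).indicator 1 t := by
    rw [integral_finsetSum _ fun i _ => integrableOn_indicator_Iio_one_mul _ _ m]
    exact sum_congr rfl fun i _ => min_sub_eq_setIntegral_indicator_mul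
      (hm (.inl (mem_range_self i))) (hm (.inr (mem_range_self (τ i))))
  have integrable (τ : Equiv.Perm ι) : IntegrableOn
      (fun t => ∑ i, (Iio (f i)).indicator (1 : ℝ → ℝ) t * (Iio (g (τ i))).indicator 1 t)
      (Ioi m) :=
    integrable_finsetSum _ fun i _ => integrableOn_indicator_Iio_one_mul _ _ m
  have threshold (t : ℝ) := (hfg.comp_monotone (monotone_indicator_Iio_one t)
    (monotone_indicator_Iio_one t)).sum_mul_comp_perm_le_sum_mul (σ := σ)
  have h := setIntegral_mono (integrable σ) (integrable 1) threshold
  rw [← layer_cake, ← layer_cake] at h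
  simpa [sum_sub_distrib] using h

theorem min_sum_rearrangement_general (n : ℕ) (x y : Fin n → ℝ)
    (hx : Antitone x) (hy : Antitone y) (σ : Equiv.Perm (Fin n)) :
    ∑ i, min (x i) (y (σ i)) ≤ ∑ i, min (x i) (y i) :=
  (hx.monovary hy).sum_min_comp_perm_le_sum_min σ

/-- **Rearrangement inequality for minima.**
If `x, y : Fin n → ℝ` (with `n ≥ 1`) are both sorted in nonincreasing order,
then for every permutation `σ` of `Fin n`,
`∑ i, min (x i) (y i) ≥ ∑ i, min (x i) (y (σ i))`. -/
theorem min_sum_rearrangement (n : ℕ) (hn : 1 ≤ n) (x y : Fin n → ℝ)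
    (hx : Antitone x) (hy : Antitone y) (σ : Equiv.Perm (Fin n)) :
    ∑ i, min (x i) (y (σ i)) ≤ ∑ i, min (x i) (y i) :=
  min_sum_rearrangement_general n x y hx hy σ
end

section
/- Let U and U' be two n×m matrices with entries in [0,1] whose rows each sum to 1. Then there exists k ∈ {0,1,…,m−1} such that, for the cyclic column shift σ(j) = ((j + k − 1) mod m) + 1, it holds that Σ_{i∈[n]} Σ_{j∈[m]} min(U_{i,j}, U'_{i,σ(j)}) ≥ n/m. -/
/-!
Average over all `m` cyclic shifts. Since `min x y ≥ x * y` on `[0,1]`, the shifts together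
cover, in each row, at least `∑ₖ ∑ⱼ U i j * U' i (j + k) = (∑ⱼ U i j) * (∑ⱼ U' i j) = 1`.
Hence the `m` shift sums add up to at least `n`, and one of them is at least `n / m`.
-/

open Finset

theorem sum_sum_mul_add_eq_sum_mul_sum {G R : Type*} [AddGroup G] [Fintype G]
    [NonUnitalNonAssocSemiring R] (f g : G → R) :
    ∑ k, ∑ j, f j * g (j + k) = (∑ j, f j) * ∑ j, g j := by
  rw [sum_comm, sum_mul]
  refine sum_congr rfl fun j _ => ?_
  rw [← mul_sum]
  exact congrArg (f j * ·) (Equiv.sum_comp (Equiv.addLeft j) g)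

theorem mul_le_min_of_mem_Icc {x y : ℝ} (hx0 : 0 ≤ x) (hx1 : x ≤ 1) (hy0 : 0 ≤ y)
    (hy1 : y ≤ 1) : x * y ≤ min x y :=
  le_min (mul_le_of_le_one_right hx0 hy1) (mul_le_of_le_one_left hy0 hx1)

theorem one_le_sum_sum_min_add {G : Type*} [AddGroup G] [Fintype G] {u v : G → ℝ}
    (hu0 : ∀ j, 0 ≤ u j) (hu1 : ∀ j, u j ≤ 1) (hv0 : ∀ j, 0 ≤ v j) (hv1 : ∀ j, v j ≤ 1)
    (hu : ∑ j, u j = 1) (hv : ∑ j, v j = 1) :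
    1 ≤ ∑ k, ∑ j, min (u j) (v (j + k)) :=
  calc (1 : ℝ) = ∑ k, ∑ j, u j * v (j + k) := by
        rw [sum_sum_mul_add_eq_sum_mul_sum, hu, hv, one_mul]
    _ ≤ ∑ k, ∑ j, min (u j) (v (j + k)) :=
        sum_le_sum fun k _ => sum_le_sum fun j _ =>
          mul_le_min_of_mem_Icc (hu0 j) (hu1 j) (hv0 _) (hv1 _)

/-- For two row-stochastic `n × m` matrices `U, U'` with entries in `[0,1]`
(each row summing to `1`), there is a cyclic column shift `j ↦ j + k`
(addition in `Fin m`, i.e. mod `m`) such that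
`∑ᵢ∑ⱼ min (U i j) (U' i (j + k)) ≥ n / m`. -/
theorem exists_cyclic_shift_min_sum_ge (n m : ℕ) (hm : 0 < m)
    (U U' : Matrix (Fin n) (Fin m) ℝ)
    (hU0 : ∀ i j, 0 ≤ U i j) (hU1 : ∀ i j, U i j ≤ 1)
    (hU'0 : ∀ i j, 0 ≤ U' i j) (hU'1 : ∀ i j, U' i j ≤ 1)
    (hUrow : ∀ i, ∑ j, U i j = 1) (hU'row : ∀ i, ∑ j, U' i j = 1) :
    ∃ k : Fin m, (n : ℝ) / (m : ℝ) ≤ ∑ i, ∑ j, min (U i j) (U' i (j + k)) := by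
  have : NeZero m := ⟨hm.ne'⟩
  have htotal : ∑ _k : Fin m, (n : ℝ) / m ≤ ∑ k, ∑ i, ∑ j, min (U i j) (U' i (j + k)) :=
    calc ∑ _k : Fin m, (n : ℝ) / m = ∑ _i : Fin n, (1 : ℝ) := by
          simp only [sum_const, card_univ, Fintype.card_fin, nsmul_eq_mul, mul_one]
          field_simp
      _ ≤ ∑ i, ∑ k, ∑ j, min (U i j) (U' i (j + k)) :=
          sum_le_sum fun i _ => one_le_sum_sum_min_add (hU0 i) (hU1 i) (hU'0 i) (hU'1 i)
            (hUrow i) (hU'row i)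
      _ = ∑ k, ∑ i, ∑ j, min (U i j) (U' i (j + k)) := sum_comm
  obtain ⟨k, -, hk⟩ := exists_le_of_sum_le univ_nonempty htotal
  exact ⟨k, hk⟩
end

section
/- Let U and U' be two n×m matrices with nonnegative entries whose rows each sum to 1. Then the valuation distance satisfies d_v(U, U') ≤ 2n − 2n/m; that is, there exist bijections π_a : [n] → [n] and π_g : [m] → [m] with Σ_{i∈[n]} Σ_{j∈[m]} |U_{i,j} − U'_{π_a(i), π_g(j)}| ≤ 2n − 2n/m. -/
/-!
For probability vectors `p, q` one has `‖p - q‖₁ = 2 - 2 ∑ⱼ min (pⱼ, qⱼ)`, so it suffices to find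
a permutation of the goods, leaving the agents fixed, under which the total overlap
`∑ᵢ ∑ⱼ min (U i j) (U' i (π j))` is at least `n / m`. Since `min a b ≥ a b` on `[0, 1]`, summing
the overlap over all pairs `(j, k)` gives at least `∑ᵢ (∑ⱼ U i j) (∑ₖ U' i k) = n`; the `m` cyclic
shifts `j ↦ c + j` of `Fin m` cover every pair exactly once, so one of them achieves the average.
-/

open Finset

theorem abs_sub_eq_add_sub_two_mul_min {α : Type*} [Ring α] [LinearOrder α] [IsOrderedRing α]
    (a b : α) : |a - b| = a + b - 2 * min a b := by
  rw [← max_sub_min_eq_abs', ← min_add_max a b, two_mul]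
  abel

theorem mul_le_min_of_le_one {α : Type*} [Semiring α] [LinearOrder α] [IsOrderedRing α]
    {a b : α} (ha : 0 ≤ a) (hb : 0 ≤ b) (ha1 : a ≤ 1) (hb1 : b ≤ 1) : a * b ≤ min a b :=
  le_min (mul_le_of_le_one_right ha hb1) (mul_le_of_le_one_left hb ha1)

section ProbabilityVector

variable {ι : Type*} [Fintype ι] {p q : ι → ℝ}

theorem sum_abs_sub_eq_two_sub_sum_min (hp : ∑ j, p j = 1) (hq : ∑ j, q j = 1) :
    ∑ j, |p j - q j| = 2 - 2 * ∑ j, min (p j) (q j) := by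
  simp only [abs_sub_eq_add_sub_two_mul_min, sum_sub_distrib, sum_add_distrib, hp, hq, mul_sum]
  norm_num

theorem one_le_sum_sum_min (hp₀ : ∀ j, 0 ≤ p j) (hq₀ : ∀ k, 0 ≤ q k)
    (hp : ∑ j, p j = 1) (hq : ∑ k, q k = 1) : 1 ≤ ∑ j, ∑ k, min (p j) (q k) := by
  have le_one {r : ι → ℝ} (hr₀ : ∀ j, 0 ≤ r j) (hr : ∑ j, r j = 1) (j : ι) : r j ≤ 1 :=
    hr ▸ single_le_sum (fun k _ => hr₀ k) (mem_univ j)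
  calc (1 : ℝ) = ∑ j, ∑ k, p j * q k := by rw [← sum_mul_sum, hp, hq, one_mul]
    _ ≤ _ := sum_le_sum fun j _ => sum_le_sum fun k _ =>
      mul_le_min_of_le_one (hp₀ j) (hq₀ k) (le_one hp₀ hp j) (le_one hq₀ hq k)

end ProbabilityVector

theorem exists_sum_le_card_mul_sum_add_left {G : Type*} [AddGroup G] [Fintype G] [Nonempty G]
    (f : G → G → ℝ) : ∃ c, ∑ j, ∑ k, f j k ≤ Fintype.card G * ∑ j, f j (c + j) := by
  have hshifts : ∑ c, ∑ j, f j (c + j) = ∑ j, ∑ k, f j k := by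
    rw [sum_comm]
    exact sum_congr rfl fun j _ => Equiv.sum_comp (Equiv.addRight j) (f j)
  obtain ⟨c, -, hc⟩ := exists_le_of_sum_le (f := fun _ => ∑ j, ∑ k, f j k)
    (g := fun c => Fintype.card G * ∑ j, f j (c + j)) univ_nonempty
    (by rw [← mul_sum, hshifts, sum_const, card_univ, nsmul_eq_mul])
  exact ⟨c, hc⟩

/-- **Upper bound on the valuation distance.**
For two row-stochastic `n × m` matrices `U, U'` (nonnegative entries, rows summing
to `1`), there are bijections `π_a` of the agents and `π_g` of the goods with
`∑ᵢ∑ⱼ |U i j − U' (π_a i) (π_g j)| ≤ 2n − 2n/m`; hence `d_v(U,U') ≤ 2n − 2n/m`. -/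
theorem valuation_distance_le (n m : ℕ)
    (U U' : Matrix (Fin n) (Fin m) ℝ)
    (hU : ∀ i j, 0 ≤ U i j) (hU' : ∀ i j, 0 ≤ U' i j)
    (hUrow : ∀ i, ∑ j, U i j = 1) (hU'row : ∀ i, ∑ j, U' i j = 1) :
    ∃ (πa : Equiv.Perm (Fin n)) (πg : Equiv.Perm (Fin m)),
      ∑ i, ∑ j, |U i j - U' (πa i) (πg j)| ≤
        2 * (n : ℝ) - 2 * (n : ℝ) / (m : ℝ) := by
  obtain rfl | hn := n.eq_zero_or_pos
  · exact ⟨1, 1, by simp⟩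
  have : NeZero m := ⟨by rintro rfl; simpa using hUrow ⟨0, hn⟩⟩
  obtain ⟨c, hc⟩ := exists_sum_le_card_mul_sum_add_left fun j k => ∑ i, min (U i j) (U' i k)
  refine ⟨1, Equiv.addLeft c, ?_⟩
  have hshift (i : Fin n) : ∑ j, U' i (c + j) = 1 :=
    Equiv.sum_comp (Equiv.addLeft c) (U' i) ▸ hU'row i
  have hdist : ∑ i, ∑ j, |U i j - U' i (c + j)| =
      2 * n - 2 * ∑ j, ∑ i, min (U i j) (U' i (c + j)) := by
    simp only [sum_abs_sub_eq_two_sub_sum_min (hUrow _) (hshift _), sum_sub_distrib, ← mul_sum]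
    rw [sum_comm]
    simp [mul_comm]
  have htotal : (n : ℝ) ≤ ∑ j, ∑ k, ∑ i, min (U i j) (U' i k) := by
    calc (n : ℝ) = ∑ _i : Fin n, 1 := by simp
      _ ≤ ∑ i, ∑ j, ∑ k, min (U i j) (U' i k) := sum_le_sum fun i _ =>
          one_le_sum_sum_min (hU i) (hU' i) (hUrow i) (hU'row i)
      _ = _ := by simp only [sum_comm (s := univ (α := Fin n))]
  rw [Fintype.card_fin] at hc
  simp only [Equiv.Perm.coe_one, id_eq, Equiv.coe_addLeft, hdist, mul_div_assoc]
  gcongr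
  exact div_le_of_le_mul₀ (Nat.cast_nonneg m) (sum_nonneg fun _ _ => sum_nonneg fun _ _ =>
    le_min (hU _ _) (hU' _ _)) (htotal.trans (hc.trans_eq (mul_comm _ _)))
end

section
/- Let U and U' be two n×m matrices with nonnegative entries whose rows each sum to 1. Then the demand distance is at most the valuation distance: d_d(U, U') ≤ d_v(U, U'). -/
/-!
Fix a permutation `σ` of the agents and `π` of the goods. For each good `j`, the cost of
matching column `j` of `U` with column `π j` of `U'` row by row along `σ` is at least the
`ℓ¹` distance between the two columns sorted in the same order: for two monotone lists of
reals the identity matching is an optimal `ℓ¹` matching, because uncrossing two crossed pairs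
(`|a - c| + |b - d| ≤ |a - d| + |b - c|` for `a ≤ b`, `c ≤ d`) never increases the cost, and
repeatedly uncrossing at the smallest misplaced index reaches the identity. Summing over the
goods bounds `d_d(U, U')` by the cost of `(σ, π)`.
-/

/-- The valuation distance: the minimum over all permutations of agents and goods
of the entrywise ℓ¹ distance between the permuted utility matrices. -/
noncomputable def valDist {n m : ℕ} (U U' : Matrix (Fin n) (Fin m) ℝ) : ℝ :=
  ⨅ p : Equiv.Perm (Fin n) × Equiv.Perm (Fin m),
    ∑ i, ∑ j, |U i j - U' (p.1 i) (p.2 j)|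

/-- The demand vector of good `j`: the `j`-th column of `U`, sorted in
nonincreasing order (obtained by composing the nondecreasing sorting permutation
with the order-reversal of `Fin n`). -/
noncomputable def dem {n m : ℕ} (U : Matrix (Fin n) (Fin m) ℝ) (j : Fin m) :
    Fin n → ℝ :=
  fun i => U (Tuple.sort (fun i' => U i' j) i.rev) j

/-- The demand distance: the minimum over all permutations of the goods of the
sum of ℓ¹ distances between matched demand vectors. -/
noncomputable def demDist {n m : ℕ} (U U' : Matrix (Fin n) (Fin m) ℝ) : ℝ :=
  ⨅ π : Equiv.Perm (Fin m), ∑ j, ∑ i, |dem U j i - dem U' (π j) i|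

open Equiv Equiv.Perm Finset

theorem abs_sub_add_abs_sub_le_of_le {a b c d : ℝ} (hab : a ≤ b) (hcd : c ≤ d) :
    |a - c| + |b - d| ≤ |a - d| + |b - c| := by
  rcases abs_cases (a - c) with ⟨h₁, _⟩ | ⟨h₁, _⟩ <;>
  rcases abs_cases (b - d) with ⟨h₂, _⟩ | ⟨h₂, _⟩ <;>
  rcases abs_cases (a - d) with ⟨h₃, _⟩ | ⟨h₃, _⟩ <;>
  rcases abs_cases (b - c) with ⟨h₄, _⟩ | ⟨h₄, _⟩ <;>
  linarith

theorem Fintype.sum_le_sum_of_pair_le {ι M : Type*} [Fintype ι] [DecidableEq ι]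
    [AddCommMonoid M] [PartialOrder M] [IsOrderedAddMonoid M] {p q : ι → M} {a b : ι}
    (hab : a ≠ b) (hpair : p a + p b ≤ q a + q b) (hoff : ∀ i, i ≠ a → i ≠ b → p i = q i) :
    ∑ i, p i ≤ ∑ i, q i := by
  rw [← sum_add_sum_compl {a, b} p, ← sum_add_sum_compl {a, b} q, sum_pair hab, sum_pair hab]
  refine add_le_add hpair (Finset.sum_congr rfl fun i hi => ?_).le
  simp only [mem_compl, mem_insert, mem_singleton, not_or] at hi
  exact hoff i hi.1 hi.2

section Uncrossing

variable {ι : Type*} [Fintype ι] [LinearOrder ι] {f g : ι → ℝ}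

theorem Monotone.sum_abs_sub_swap_mul_le (hf : Monotone f) (hg : Monotone g) {σ : Perm ι}
    {x : ι} (hx : σ x ≠ x) (hxσ : x ≤ σ x) (hxσ' : x ≤ σ⁻¹ x) :
    ∑ i, |f i - g ((swap x (σ x) * σ) i)| ≤ ∑ i, |f i - g (σ i)| := by
  have hσσ' : σ (σ⁻¹ x) = x := σ.apply_symm_apply x
  have hne : x ≠ σ⁻¹ x := fun h => hx (by rw [h, hσσ', ← h])
  refine Fintype.sum_le_sum_of_pair_le hne ?_ fun i hix hiy => ?_
  · rw [mul_apply, mul_apply, swap_apply_right, hσσ', swap_apply_left]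
    exact abs_sub_add_abs_sub_le_of_le (hf hxσ') (hg hxσ)
  · rw [mul_apply, swap_apply_of_ne_of_ne _ (σ.injective.ne hix)]
    rwa [Ne, ← eq_inv_iff_eq]

theorem Monotone.sum_abs_sub_le_sum_abs_sub_comp_perm (hf : Monotone f) (hg : Monotone g)
    (σ : Perm ι) : ∑ i, |f i - g i| ≤ ∑ i, |f i - g (σ i)| := by
  induction hk : #σ.support using Nat.strong_induction_on generalizing σ with
  | _ k ih =>
  obtain rfl | hσ := eq_or_ne σ 1
  · simp
  have hsupp : σ.support.Nonempty := nonempty_iff_ne_empty.2 (support_eq_empty_iff.not.2 hσ)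
  set x := σ.support.min' hsupp
  have hxmem : x ∈ σ.support := min'_mem _ _
  have hx : σ x ≠ x := mem_support.1 hxmem
  have hxσ : x ≤ σ x := min'_le _ _ (apply_mem_support.2 hxmem)
  have hxσ' : x ≤ σ⁻¹ x := min'_le _ _
    (support_inv σ ▸ apply_mem_support.2 (support_inv σ ▸ hxmem))
  calc ∑ i, |f i - g i|
      ≤ ∑ i, |f i - g ((swap x (σ x) * σ) i)| := ih _ (hk ▸ card_support_swap_mul hx) _ rfl
    _ ≤ ∑ i, |f i - g (σ i)| := hf.sum_abs_sub_swap_mul_le hg hx hxσ hxσ'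

theorem Antitone.sum_abs_sub_le_sum_abs_sub_comp_perm (hf : Antitone f) (hg : Antitone g)
    (σ : Perm ι) : ∑ i, |f i - g i| ≤ ∑ i, |f i - g (σ i)| :=
  Monotone.sum_abs_sub_le_sum_abs_sub_comp_perm (ι := ιᵒᵈ) hf.dual_left hg.dual_left σ

end Uncrossing

section Demand

variable {n m : ℕ} (U U' : Matrix (Fin n) (Fin m) ℝ)

theorem exists_perm_dem_eq (j : Fin m) : ∃ τ : Perm (Fin n), ∀ i, dem U j i = U (τ i) j :=
  ⟨Fin.revPerm.trans (Tuple.sort fun i => U i j), fun _ => rfl⟩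

theorem antitone_dem (j : Fin m) : Antitone (dem U j) :=
  (Tuple.monotone_sort fun i => U i j).comp_antitone Fin.rev_anti

theorem sum_abs_dem_sub_dem_le (j k : Fin m) (σ : Perm (Fin n)) :
    ∑ i, |dem U j i - dem U' k i| ≤ ∑ i, |U i j - U' (σ i) k| := by
  obtain ⟨τ, hτ⟩ := exists_perm_dem_eq U j
  obtain ⟨τ', hτ'⟩ := exists_perm_dem_eq U' k
  calc ∑ i, |dem U j i - dem U' k i|
      ≤ ∑ i, |dem U j i - dem U' k ((τ'⁻¹ * σ * τ) i)| :=
        (antitone_dem U j).sum_abs_sub_le_sum_abs_sub_comp_perm (antitone_dem U' k) _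
    _ = ∑ i, |U (τ i) j - U' (σ (τ i)) k| := by
        simp only [hτ, hτ', mul_apply, coe_inv, apply_symm_apply]
    _ = ∑ i, |U i j - U' (σ i) k| := Equiv.sum_comp τ fun i => |U i j - U' (σ i) k|

end Demand

theorem demDist_le_valDist_general (n m : ℕ) (U U' : Matrix (Fin n) (Fin m) ℝ) :
    demDist U U' ≤ valDist U U' := by
  refine le_ciInf fun ⟨σ, π⟩ => ?_
  calc demDist U U'
      ≤ ∑ j, ∑ i, |dem U j i - dem U' (π j) i| := ciInf_le (Set.finite_range _).bddBelow π
    _ ≤ ∑ j, ∑ i, |U i j - U' (σ i) (π j)| :=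
        sum_le_sum fun j _ => sum_abs_dem_sub_dem_le U U' j (π j) σ
    _ = ∑ i, ∑ j, |U i j - U' (σ i) (π j)| := sum_comm

/-- **The demand distance is at most the valuation distance** for any two
row-stochastic `n × m` matrices. -/
theorem demDist_le_valDist (n m : ℕ) (U U' : Matrix (Fin n) (Fin m) ℝ)
    (hU : ∀ i j, 0 ≤ U i j) (hU' : ∀ i j, 0 ≤ U' i j)
    (hUrow : ∀ i, ∑ j, U i j = 1) (hU'row : ∀ i, ∑ j, U' i j = 1) :
    demDist U U' ≤ valDist U U' :=
  demDist_le_valDist_general n m U U'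
end

section
/- Let U and U' be two n×m matrices with nonnegative entries whose rows each sum to 1. Then the demand distance satisfies d_d(U, U') ≤ 2n − 2n/m. -/
/-!
Some cyclic shift `j ↦ j + k` of the goods does at least as well as the average over all `m`
shifts, which is `1/m` times the sum of `‖dem U j - dem U' j'‖₁` over all pairs of goods.
Entrywise `|a - b| ≤ a + b - 2ab` on `[0, 1]`, so that pair sum is at most
`2mn - 2 ∑ᵢ Aᵢ Bᵢ`, where `A` and `B` are the row sums of the two matrices of sorted columns.
Both are antitone with total `n`, so Chebyshev's sum inequality gives `∑ᵢ Aᵢ Bᵢ ≥ n`.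
-/

open Finset

theorem iInf_perm_sum_le_sum_sum_div {m : ℕ} (c : Fin m → Fin m → ℝ) :
    ⨅ π : Equiv.Perm (Fin m), ∑ j, c j (π j) ≤ (∑ j, ∑ j', c j j') / m := by
  rcases Nat.eq_zero_or_pos m with rfl | hm
  · simp
  have : NeZero m := ⟨hm.ne'⟩
  have hshifts : ∑ k : Fin m, ∑ j, c j (Equiv.addLeft k j) = ∑ j, ∑ j', c j j' := by
    rw [Finset.sum_comm]
    exact sum_congr rfl fun j _ => Fintype.sum_equiv (Equiv.addRight j) _ _ fun _ => rfl
  have hm' : (0 : ℝ) < m := by exact_mod_cast hm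
  obtain ⟨k, -, hk⟩ := exists_le_of_sum_le (univ_nonempty (α := Fin m))
    (g := fun _ => (∑ j, ∑ j', c j j') / m) <| by
      rw [hshifts, sum_const, card_univ, Fintype.card_fin, nsmul_eq_mul,
        mul_div_cancel₀ _ hm'.ne']
  exact (ciInf_le (Set.finite_range _).bddBelow (Equiv.addLeft k)).trans hk

theorem abs_sub_le_add_sub_two_mul {a b : ℝ} (ha₀ : 0 ≤ a) (ha₁ : a ≤ 1) (hb₀ : 0 ≤ b)
    (hb₁ : b ≤ 1) : |a - b| ≤ a + b - 2 * (a * b) := by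
  rcases abs_cases (a - b) with ⟨h, _⟩ | ⟨h, _⟩ <;> rw [h] <;> nlinarith

section Dem

variable {n m : ℕ}

theorem sum_dem (U : Matrix (Fin n) (Fin m) ℝ) (j : Fin m) : ∑ i, dem U j i = ∑ i, U i j :=
  Fintype.sum_equiv (Fin.revPerm.trans (Tuple.sort fun i' => U i' j)) _ _ fun _ => rfl

theorem dem_antitone (U : Matrix (Fin n) (Fin m) ℝ) (j : Fin m) : Antitone (dem U j) :=
  fun _ _ h => Tuple.monotone_sort (fun i' => U i' j) (Fin.rev_le_rev.mpr h)

theorem antitone_sum_dem (U : Matrix (Fin n) (Fin m) ℝ) : Antitone fun i => ∑ j, dem U j i :=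
  fun _ _ h => sum_le_sum fun j _ => dem_antitone U j h

theorem dem_nonneg {U : Matrix (Fin n) (Fin m) ℝ} (hU : ∀ i j, 0 ≤ U i j) (j : Fin m)
    (i : Fin n) : 0 ≤ dem U j i :=
  hU _ _

theorem dem_le_one {U : Matrix (Fin n) (Fin m) ℝ} (hU : ∀ i j, 0 ≤ U i j)
    (hUrow : ∀ i, ∑ j, U i j = 1) (j : Fin m) (i : Fin n) : dem U j i ≤ 1 :=
  (single_le_sum (fun j' _ => hU _ j') (mem_univ j)).trans (hUrow _).le

theorem sum_sum_dem {U : Matrix (Fin n) (Fin m) ℝ} (hUrow : ∀ i, ∑ j, U i j = 1) :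
    ∑ i, ∑ j, dem U j i = n := by
  simp_rw [Finset.sum_comm (γ := Fin n), sum_dem, Finset.sum_comm (γ := Fin m), hUrow]
  simp

theorem card_le_sum_sum_dem_mul_sum_dem {U U' : Matrix (Fin n) (Fin m) ℝ}
    (hUrow : ∀ i, ∑ j, U i j = 1) (hU'row : ∀ i, ∑ j, U' i j = 1) :
    (n : ℝ) ≤ ∑ i, (∑ j, dem U j i) * ∑ j, dem U' j i := by
  rcases Nat.eq_zero_or_pos n with rfl | hn
  · simp
  have hcheb := ((antitone_sum_dem U).monovary (antitone_sum_dem U')).sum_mul_sum_le_card_mul_sum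
  rw [sum_sum_dem hUrow, sum_sum_dem hU'row, Fintype.card_fin] at hcheb
  exact le_of_mul_le_mul_left hcheb (by exact_mod_cast hn)

theorem sum_sum_sum_abs_dem_sub_le {U U' : Matrix (Fin n) (Fin m) ℝ}
    (hU : ∀ i j, 0 ≤ U i j) (hU' : ∀ i j, 0 ≤ U' i j)
    (hUrow : ∀ i, ∑ j, U i j = 1) (hU'row : ∀ i, ∑ j, U' i j = 1) :
    ∑ j, ∑ j', ∑ i, |dem U j i - dem U' j' i| ≤ 2 * m * n - 2 * n := by
  calc ∑ j, ∑ j', ∑ i, |dem U j i - dem U' j' i|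
      ≤ ∑ j, ∑ j', ∑ i, (dem U j i + dem U' j' i - 2 * (dem U j i * dem U' j' i)) :=
        sum_le_sum fun j _ => sum_le_sum fun j' _ => sum_le_sum fun i _ =>
          abs_sub_le_add_sub_two_mul (dem_nonneg hU j i) (dem_le_one hU hUrow j i)
            (dem_nonneg hU' j' i) (dem_le_one hU' hU'row j' i)
    _ = m * ∑ i, ∑ j, dem U j i + m * ∑ i, ∑ j', dem U' j' i
          - 2 * ∑ i, (∑ j, dem U j i) * ∑ j', dem U' j' i := by
        simp only [sum_add_distrib, sum_sub_distrib, ← mul_sum, sum_const, card_univ,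
          Fintype.card_fin, nsmul_eq_mul, sum_mul_sum]
        rw [sum_comm (f := fun i j => dem U j i), sum_comm (f := fun i j => dem U' j i),
          sum_comm (γ := Fin n)]
        congr 2
        exact sum_congr rfl fun j _ => by rw [sum_comm]; simp only [mul_sum]
    _ ≤ 2 * m * n - 2 * n := by
        rw [sum_sum_dem hUrow, sum_sum_dem hU'row]
        linarith [card_le_sum_sum_dem_mul_sum_dem hUrow hU'row]

end Dem

/-- **Upper bound on the demand distance:** for two row-stochastic `n × m`
matrices `U, U'`, `d_d(U, U') ≤ 2n − 2n/m`. -/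
theorem demDist_le (n m : ℕ) (U U' : Matrix (Fin n) (Fin m) ℝ)
    (hU : ∀ i j, 0 ≤ U i j) (hU' : ∀ i j, 0 ≤ U' i j)
    (hUrow : ∀ i, ∑ j, U i j = 1) (hU'row : ∀ i, ∑ j, U' i j = 1) :
    demDist U U' ≤ 2 * (n : ℝ) - 2 * (n : ℝ) / (m : ℝ) := by
  have havg : demDist U U' ≤ (∑ j, ∑ j', ∑ i, |dem U j i - dem U' j' i|) / m :=
    iInf_perm_sum_le_sum_sum_div fun j j' => ∑ i, |dem U j i - dem U' j' i|
  rcases Nat.eq_zero_or_pos m with rfl | hm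
  · simp only [Nat.cast_zero, div_zero] at havg ⊢
    linarith [n.cast_nonneg (α := ℝ)]
  have hm' : (0 : ℝ) < m := by exact_mod_cast hm
  calc demDist U U' ≤ (2 * m * n - 2 * n) / m :=
        havg.trans (div_le_div_of_nonneg_right (sum_sum_sum_abs_dem_sub_le hU hU' hUrow hU'row)
          hm'.le)
    _ = 2 * (n : ℝ) - 2 * (n : ℝ) / (m : ℝ) := by field_simp
end

section
/- There exist n, m and two n×m matrices U, U' with nonnegative entries whose rows each sum to 1, such that the demand distance d_d(U, U') equals 0 but U and U' are not isomorphic (i.e., there is no pair of bijections π_a : [n] → [n], π_g : [m] → [m] with U_{i,j} = U'_{π_a(i), π_g(j)} for all i, j). In particular, this holds for n = m = 4 with U being the matrix with rows (2,4,6,8), (3,3,6,8), (6,8,6,0), (8,6,0,6) each divided by 20, and U' being the matrix with rows (2,4,6,8), (3,3,6,8), (6,8,0,6), (8,6,6,0) each divided by 20. -/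
/-- The first witness matrix: rows (2,4,6,8), (3,3,6,8), (6,8,6,0), (8,6,0,6),
each divided by 20. -/
noncomputable def U₇ : Matrix (Fin 4) (Fin 4) ℝ :=
  (1 / 20 : ℝ) • !![2, 4, 6, 8; 3, 3, 6, 8; 6, 8, 6, 0; 8, 6, 0, 6]

/-- The second witness matrix: rows (2,4,6,8), (3,3,6,8), (6,8,0,6), (8,6,6,0),
each divided by 20. -/
noncomputable def U₇' : Matrix (Fin 4) (Fin 4) ℝ :=
  (1 / 20 : ℝ) • !![2, 4, 6, 8; 3, 3, 6, 8; 6, 8, 0, 6; 8, 6, 6, 0]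

/-!
Sorting a column forgets which agent holds which value, so two instances whose columns are
rearrangements of each other have equal demand vectors and demand distance `0`. `U₇'` is `U₇` with
the entries of agents 2 and 3 exchanged in goods 2 and 3 only. No isomorphism can account for
this: the entry `2/20` occurs only at agent 0, good 0 in both matrices, so an isomorphism fixes
that agent and that good; as the values in row 0 and in column 0 are distinct and agree in the two
matrices, it then fixes every good and every agent, forcing `U₇ = U₇'`.
-/

open Function

theorem dem_eq_of_col_eq_comp_perm {n m : ℕ} {U U' : Matrix (Fin n) (Fin m) ℝ} {j j' : Fin m}
    (σ : Equiv.Perm (Fin n)) (h : (fun i => U' i j') = (fun i => U i j) ∘ σ) :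
    dem U j = dem U' j' := by
  funext i
  have := congrFun (Tuple.comp_perm_comp_sort_eq_comp_sort (f := fun i => U i j) (σ := σ)) i.rev
  simp only [dem, ← h] at this ⊢
  exact this.symm

theorem demDist_eq_zero_of_dem_eq {n m : ℕ} {U U' : Matrix (Fin n) (Fin m) ℝ}
    (π : Equiv.Perm (Fin m)) (h : ∀ j, dem U j = dem U' (π j)) : demDist U U' = 0 := by
  have nonneg : ∀ π' : Equiv.Perm (Fin m), 0 ≤ ∑ j, ∑ i, |dem U j i - dem U' (π' j) i| :=
    fun _ => by positivity
  refine le_antisymm ?_ (le_ciInf nonneg)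
  refine (ciInf_le ⟨0, Set.forall_mem_range.2 nonneg⟩ π).trans_eq ?_
  simp [h]

theorem Matrix.eq_of_eq_submatrix_of_unique_entry {α ι κ : Type*} {U U' : Matrix ι κ α}
    {πa : Equiv.Perm ι} {πg : Equiv.Perm κ} (h : U = U'.submatrix πa πg) {i₀ : ι} {j₀ : κ}
    (hunique : ∀ i j, U' i j = U' i₀ j₀ → i = i₀ ∧ j = j₀)
    (hrow : U i₀ = U' i₀) (hcol : ∀ i, U i j₀ = U' i j₀)
    (hrow_inj : Injective (U' i₀)) (hcol_inj : Injective fun i => U' i j₀) : U = U' := by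
  have hentry : ∀ i j, U i j = U' (πa i) (πg j) := fun i j => congrFun (congrFun h i) j
  obtain ⟨hπa₀, hπg₀⟩ := hunique _ _ ((hentry i₀ j₀).symm.trans (congrFun hrow j₀))
  have hπg : ∀ j, πg j = j := fun j =>
    hrow_inj (by rw [← hπa₀, ← hentry, hπa₀, hrow])
  have hπa : ∀ i, πa i = i := fun i =>
    hcol_inj (show U' (πa i) j₀ = U' i j₀ by rw [← hπg₀, ← hentry, hπg₀, hcol])
  ext i j
  rw [hentry, hπa, hπg]

theorem U₇_nonneg (i j : Fin 4) : 0 ≤ U₇ i j := by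
  fin_cases i <;> fin_cases j <;> norm_num [U₇]

theorem U₇'_nonneg (i j : Fin 4) : 0 ≤ U₇' i j := by
  fin_cases i <;> fin_cases j <;> norm_num [U₇']

theorem sum_U₇_row (i : Fin 4) : ∑ j, U₇ i j = 1 := by
  fin_cases i <;> norm_num [U₇, Fin.sum_univ_four, Matrix.cons_val_two, Matrix.cons_val_three]

theorem sum_U₇'_row (i : Fin 4) : ∑ j, U₇' i j = 1 := by
  fin_cases i <;> norm_num [U₇', Fin.sum_univ_four, Matrix.cons_val_two, Matrix.cons_val_three]

theorem dem_U₇_eq_dem_U₇' (j : Fin 4) : dem U₇ j = dem U₇' j := by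
  fin_cases j
  · exact dem_eq_of_col_eq_comp_perm 1 (by funext i; fin_cases i <;> simp [U₇, U₇'])
  · exact dem_eq_of_col_eq_comp_perm 1 (by funext i; fin_cases i <;> simp [U₇, U₇'])
  · exact dem_eq_of_col_eq_comp_perm (Equiv.swap 2 3)
      (by funext i; fin_cases i <;> simp [U₇, U₇', Equiv.swap_apply_of_ne_of_ne])
  · exact dem_eq_of_col_eq_comp_perm (Equiv.swap 2 3)
      (by funext i; fin_cases i <;> simp [U₇, U₇', Equiv.swap_apply_of_ne_of_ne])

theorem U₇_ne_U₇' : U₇ ≠ U₇' := fun h => by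
  have := congrFun (congrFun h 2) 2
  norm_num [U₇, U₇', Matrix.cons_val_two] at this

theorem eq_zero_of_U₇'_eq_U₇'_zero_zero (i j : Fin 4) (h : U₇' i j = U₇' 0 0) : i = 0 ∧ j = 0 := by
  revert h; fin_cases i <;> fin_cases j <;> norm_num [U₇']

theorem U₇_zero_eq_U₇'_zero : U₇ 0 = U₇' 0 := by
  funext j; fin_cases j <;> simp [U₇, U₇']

theorem U₇_col_zero_eq_U₇'_col_zero (i : Fin 4) : U₇ i 0 = U₇' i 0 := by
  fin_cases i <;> simp [U₇, U₇']

theorem injective_U₇'_zero : Injective (U₇' 0) := by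
  intro j j'; fin_cases j <;> fin_cases j' <;> norm_num [U₇']

theorem injective_U₇'_col_zero : Injective fun i => U₇' i 0 := by
  intro i i'; fin_cases i <;> fin_cases i' <;> norm_num [U₇']

/-- **The demand distance can vanish on non-isomorphic instances:** the two
concrete `4 × 4` row-stochastic matrices `U₇` and `U₇'` have demand distance `0`,
yet they are not isomorphic (no pair of row/column permutations transforms one
into the other). -/
theorem demDist_eq_zero_not_isomorphic :
    (∀ i j, 0 ≤ U₇ i j) ∧ (∀ i, ∑ j, U₇ i j = 1) ∧
    (∀ i j, 0 ≤ U₇' i j) ∧ (∀ i, ∑ j, U₇' i j = 1) ∧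
    demDist U₇ U₇' = 0 ∧
    ¬ ∃ (πa : Equiv.Perm (Fin 4)) (πg : Equiv.Perm (Fin 4)),
        ∀ i j, U₇ i j = U₇' (πa i) (πg j) := by
  refine ⟨U₇_nonneg, sum_U₇_row, U₇'_nonneg, sum_U₇'_row,
    demDist_eq_zero_of_dem_eq 1 dem_U₇_eq_dem_U₇', ?_⟩
  rintro ⟨πa, πg, h⟩
  exact U₇_ne_U₇' <| Matrix.eq_of_eq_submatrix_of_unique_entry (Matrix.ext h)
    eq_zero_of_U₇'_eq_U₇'_zero_zero U₇_zero_eq_U₇'_zero U₇_col_zero_eq_U₇'_col_zero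
    injective_U₇'_zero injective_U₇'_col_zero
end

section
/- Let m ≥ n ≥ 2 and let U be an n×m matrix with nonnegative entries whose rows each sum to 1. Then σ₁(U) = √(n/m) if and only if every column of U sums to n/m. -/
/-!
`σ₁(U)²` is the largest eigenvalue `λ` of `Uᵀ U`, and `c - Uᵀ U` is positive semidefinite exactly
when `λ ≤ c`; so `λ` is the best constant in `‖U x‖² ≤ c ‖x‖²`. The all-ones vector `𝟙` has
`‖U 𝟙‖² = n` and `‖𝟙‖² = m`, whence `n / m ≤ λ` always, and `Uᵀ U 𝟙 = Uᵀ 𝟙` is the vector of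
column sums. If `λ = n / m`, then `𝟙` lies in the kernel of the positive semidefinite matrix
`λ - Uᵀ U`, i.e. every column sums to `n / m`. Conversely, if every column sums to `n / m`, Jensen's
inequality in each row gives `‖U x‖² ≤ ∑ⱼ (∑ᵢ Uᵢⱼ) xⱼ² = (n / m) ‖x‖²`, so `λ ≤ n / m`.
-/

/-- The `k`-th largest singular value (`k` is 0-indexed, so `σ₁ = singVal U 0`,
`σ₂ = singVal U 1`): the square root of the `k`-th largest eigenvalue of the
Gram matrix `Uᵀ U` (for real matrices `Uᴴ = Uᵀ`). -/
noncomputable def singVal {α β : Type*} [Fintype α] [Fintype β] [DecidableEq β]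
    (U : Matrix α β ℝ) (k : ℕ) : ℝ :=
  Real.sqrt
    (((Finset.univ.val.map
      (show (Matrix.transpose U * U).IsHermitian by
        simpa using Matrix.isHermitian_conjTranspose_mul_self U).eigenvalues).sort (· ≥ ·)).getD k 0)

open Matrix

namespace Matrix.IsHermitian

open scoped ComplexOrder

variable {𝕜 n : Type*} [RCLike 𝕜] [Fintype n] [DecidableEq n] {A : Matrix n n 𝕜}

theorem algebraMap_sub (hA : A.IsHermitian) (c : ℝ) :
    (algebraMap ℝ (Matrix n n 𝕜) c - A).IsHermitian :=
  IsSelfAdjoint.sub ((IsSelfAdjoint.all c).algebraMap _) hA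

theorem posSemidef_algebraMap_sub_iff (hA : A.IsHermitian) (c : ℝ) :
    (algebraMap ℝ (Matrix n n 𝕜) c - A).PosSemidef ↔ ∀ i, hA.eigenvalues i ≤ c := by
  have hB := hA.algebraMap_sub c
  have hrange : Set.range hB.eigenvalues = Set.range fun i ↦ c - hA.eigenvalues i := by
    rw [← hB.spectrum_real_eq_range_eigenvalues, ← spectrum.singleton_sub_eq,
      hA.spectrum_real_eq_range_eigenvalues, Set.singleton_sub, ← Set.range_comp]
    rfl
  rw [hB.posSemidef_iff_eigenvalues_nonneg, Pi.le_def]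
  simpa only [Pi.zero_apply, Set.forall_mem_range, sub_nonneg] using
    (congrArg (fun s : Set ℝ ↦ ∀ x ∈ s, 0 ≤ x) hrange).to_iff

theorem eigenvalues_le_iff_dotProduct_mulVec_le (hA : A.IsHermitian) (c : ℝ) :
    (∀ i, hA.eigenvalues i ≤ c) ↔ ∀ x, star x ⬝ᵥ A *ᵥ x ≤ c * (star x ⬝ᵥ x) := by
  rw [← hA.posSemidef_algebraMap_sub_iff, posSemidef_iff_dotProduct_mulVec,
    and_iff_right (hA.algebraMap_sub c)]
  simp [sub_mulVec, Algebra.algebraMap_eq_smul_one, smul_mulVec, sub_nonneg]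

theorem mulVec_eq_smul_of_dotProduct_mulVec_eq (hA : A.IsHermitian) {c : ℝ}
    (hc : ∀ i, hA.eigenvalues i ≤ c) {x : n → 𝕜}
    (hx : star x ⬝ᵥ A *ᵥ x = c * (star x ⬝ᵥ x)) : A *ᵥ x = c • x := by
  simpa [sub_mulVec, Algebra.algebraMap_eq_smul_one, smul_mulVec, hx, sub_eq_zero, eq_comm] using
    ((hA.posSemidef_algebraMap_sub_iff c).2 hc).dotProduct_mulVec_zero_iff x

end Matrix.IsHermitian

theorem Finset.getD_sort_ge_map_zero {ι α : Type*} [LinearOrder α] (s : Finset ι)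
    (hs : s.Nonempty) (f : ι → α) (d : α) :
    ((s.val.map f).sort (· ≥ ·)).getD 0 d = s.sup' hs f := by
  have hmem : ∀ x, x ∈ (s.val.map f).sort (· ≥ ·) ↔ ∃ i ∈ s, f i = x := by simp
  obtain ⟨a, l, hcons⟩ := List.exists_cons_of_ne_nil
    (List.ne_nil_of_mem ((hmem _).2 ⟨_, hs.choose_spec, rfl⟩))
  have hsorted : (a :: l).Pairwise (· ≥ ·) := hcons ▸ Multiset.pairwise_sort _ _
  rw [hcons] at hmem ⊢
  rw [List.getD_cons_zero]
  apply le_antisymm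
  · obtain ⟨i, hi, rfl⟩ := (hmem a).1 List.mem_cons_self
    exact Finset.le_sup' f hi
  · refine Finset.sup'_le _ _ fun i hi ↦ ?_
    rcases List.mem_cons.1 ((hmem _).2 ⟨i, hi, rfl⟩) with h | h
    · exact h.le
    · exact List.rel_of_pairwise_cons hsorted h

theorem Finset.sq_sum_mul_le_sum_mul_sum_mul_sq {ι : Type*} (s : Finset ι) {w x : ι → ℝ}
    (hw : ∀ i ∈ s, 0 ≤ w i) :
    (∑ i ∈ s, w i * x i) ^ 2 ≤ (∑ i ∈ s, w i) * ∑ i ∈ s, w i * x i ^ 2 :=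
  Finset.sum_sq_le_sum_mul_sum_of_sq_le_mul s hw
    (fun i hi ↦ mul_nonneg (hw i hi) (sq_nonneg (x i))) fun i _ ↦ by
      rw [mul_pow, sq (w i), mul_assoc]

section Gram

variable {α β : Type*} [Fintype α] [Fintype β]

theorem Matrix.dotProduct_transpose_mul_mulVec (U : Matrix α β ℝ) (x : β → ℝ) :
    x ⬝ᵥ (Uᵀ * U) *ᵥ x = U *ᵥ x ⬝ᵥ U *ᵥ x := by
  rw [← mulVec_mulVec, dotProduct_mulVec, vecMul_transpose]

theorem Matrix.mulVec_dotProduct_mulVec_le {U : Matrix α β ℝ} (hU : ∀ i j, 0 ≤ U i j)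
    (hrow : ∀ i, ∑ j, U i j = 1) {r : ℝ} (hcol : ∀ j, ∑ i, U i j ≤ r) (x : β → ℝ) :
    U *ᵥ x ⬝ᵥ U *ᵥ x ≤ r * (x ⬝ᵥ x) :=
  calc U *ᵥ x ⬝ᵥ U *ᵥ x = ∑ i, (∑ j, U i j * x j) ^ 2 := by simp [dotProduct, mulVec, sq]
    _ ≤ ∑ i, ∑ j, U i j * x j ^ 2 := Finset.sum_le_sum fun i _ ↦ by
        simpa [hrow i] using Finset.univ.sq_sum_mul_le_sum_mul_sum_mul_sq (x := x) fun j _ ↦ hU i j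
    _ = ∑ j, (∑ i, U i j) * x j ^ 2 := by rw [Finset.sum_comm]; simp [Finset.sum_mul]
    _ ≤ ∑ j, r * x j ^ 2 := by gcongr with j; exact hcol j
    _ = r * (x ⬝ᵥ x) := by simp [dotProduct, Finset.mul_sum, sq]

variable [DecidableEq β] [Nonempty β]

theorem singVal_zero_eq_sqrt_sup' (U : Matrix α β ℝ) (hA : (Uᵀ * U).IsHermitian) :
    singVal U 0 = √(Finset.univ.sup' Finset.univ_nonempty hA.eigenvalues) :=
  congrArg Real.sqrt (Finset.getD_sort_ge_map_zero _ _ _ _)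

theorem Matrix.sup'_eigenvalues_transpose_mul_self_le_iff {U : Matrix α β ℝ}
    (hA : (Uᵀ * U).IsHermitian) (c : ℝ) :
    Finset.univ.sup' Finset.univ_nonempty hA.eigenvalues ≤ c ↔
      ∀ x, U *ᵥ x ⬝ᵥ U *ᵥ x ≤ c * (x ⬝ᵥ x) := by
  rw [Finset.sup'_le_iff]
  simpa [dotProduct_transpose_mul_mulVec] using hA.eigenvalues_le_iff_dotProduct_mulVec_le c

end Gram

theorem singVal_one_eq_sqrt_iff_general (n m : ℕ)
    (U : Matrix (Fin n) (Fin m) ℝ)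
    (hU : ∀ i j, 0 ≤ U i j) (hUrow : ∀ i, ∑ j, U i j = 1) :
    singVal U 0 = Real.sqrt ((n : ℝ) / (m : ℝ)) ↔
      ∀ j, ∑ i, U i j = (n : ℝ) / (m : ℝ) := by
  rcases Nat.eq_zero_or_pos m with rfl | hm
  · simp [singVal] -- `n / 0 = 0`, and there are no columns
  have : NeZero m := ⟨hm.ne'⟩
  have hA : (Uᵀ * U).IsHermitian := by simpa using isHermitian_conjTranspose_mul_self U
  set σ := Finset.univ.sup' Finset.univ_nonempty hA.eigenvalues
  have hU1 : U *ᵥ 1 = 1 := funext fun i ↦ by simp [mulVec, dotProduct, hUrow]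
  have hU1sq : U *ᵥ 1 ⬝ᵥ U *ᵥ 1 = n := by simp [hU1]
  have h1sq : (1 : Fin m → ℝ) ⬝ᵥ 1 = m := by simp
  have hlow : (n : ℝ) / m ≤ σ := by
    rw [div_le_iff₀ (Nat.cast_pos.2 hm), ← hU1sq, ← h1sq]
    exact (sup'_eigenvalues_transpose_mul_self_le_iff hA σ).1 le_rfl 1
  rw [singVal_zero_eq_sqrt_sup' U hA, Real.sqrt_inj (hlow.trans' (by positivity)) (by positivity)]
  constructor
  · intro hσ j
    have h := hA.mulVec_eq_smul_of_dotProduct_mulVec_eq (c := σ)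
      (fun i ↦ Finset.le_sup' _ (Finset.mem_univ i)) (x := 1)
      (by simp [dotProduct_transpose_mul_mulVec, hU1sq, h1sq, hσ])
    rw [← mulVec_mulVec, hU1] at h
    simpa [mulVec, dotProduct, hσ] using congrFun h j
  · intro hcol
    exact le_antisymm ((sup'_eigenvalues_transpose_mul_self_le_iff hA _).2
      (mulVec_dotProduct_mulVec_le hU hUrow fun j ↦ (hcol j).le)) hlow

/-- **"South" boundary (characterization):** for a row-stochastic `n × m` matrix
`U` with `m ≥ n ≥ 2`, `σ₁(U) = √(n/m)` iff every column of `U` sums to `n/m`. -/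
theorem singVal_one_eq_sqrt_iff (n m : ℕ) (hn : 2 ≤ n) (hm : n ≤ m)
    (U : Matrix (Fin n) (Fin m) ℝ)
    (hU : ∀ i j, 0 ≤ U i j) (hUrow : ∀ i, ∑ j, U i j = 1) :
    singVal U 0 = Real.sqrt ((n : ℝ) / (m : ℝ)) ↔
      ∀ j, ∑ i, U i j = (n : ℝ) / (m : ℝ) :=
  singVal_one_eq_sqrt_iff_general n m U hU hUrow
end

section
/- Let n = m ≥ 2 and consider the characteristic instances IND_m, SEP_m, CON_m (each an m×m row-stochastic matrix). Then the three pairwise valuation distances are all equal to 2(m − 1): d_v(IND_m, SEP_m) = d_v(IND_m, CON_m) = d_v(SEP_m, CON_m) = 2(m − 1). -/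
/-- The indifference instance: every entry equals `1/m`. -/
noncomputable def IND (m : ℕ) : Matrix (Fin m) (Fin m) ℝ :=
  Matrix.of fun _ _ => (1 : ℝ) / m

/-- The separability instance: the identity matrix. -/
def SEP (m : ℕ) : Matrix (Fin m) (Fin m) ℝ :=
  Matrix.of fun i j => if i = j then 1 else 0

/-- The contention instance: first column all ones, zeros elsewhere. -/
def CON (m : ℕ) : Matrix (Fin m) (Fin m) ℝ :=
  Matrix.of fun _ j => if (j : ℕ) = 0 then 1 else 0

/-! Permuting the goods of `SEP` or `CON` still leaves a matrix whose rows are unit vectors, and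
`IND` is invariant under all permutations, so for each of the three pairs the ℓ¹ cost is the same
for every pair of permutations and the minimum is that common value. A row `1/m, …, 1/m` is at
distance `(1 - 1/m) + (m - 1)/m` from any unit row, while two unit rows are at distance `2` unless
they coincide, which for `SEP` against `CON` happens in exactly one row. -/

open Finset

section UnitRows

variable {ι : Type*} [Fintype ι] [DecidableEq ι]

theorem sum_abs_const_sub_single (k : ι) {c : ℝ} (hc₀ : 0 ≤ c) (hc₁ : c ≤ 1) :
    ∑ j, |c - (Pi.single k 1 : ι → ℝ) j| = (1 - c) + (Fintype.card ι - 1) * c := by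
  rw [Fintype.sum_eq_add_sum_compl k, Pi.single_eq_same, abs_of_nonpos (by linarith)]
  have hoff : ∀ j ∈ ({k}ᶜ : Finset ι), |c - (Pi.single k 1 : ι → ℝ) j| = c := fun j hj => by
    rw [Pi.single_eq_of_ne (by simpa using hj), sub_zero, abs_of_nonneg hc₀]
  rw [sum_congr rfl hoff, sum_const, card_compl, card_singleton, nsmul_eq_mul,
    Nat.cast_sub (Fintype.card_pos_iff.mpr ⟨k⟩), Nat.cast_one]
  ring

theorem sum_abs_single_sub_single (i k : ι) :
    ∑ j, |(Pi.single i 1 : ι → ℝ) j - (Pi.single k 1 : ι → ℝ) j| = if i = k then 0 else 2 := by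
  split_ifs with hik
  · simp [hik]
  have hdisj : ∀ j, |(Pi.single i 1 : ι → ℝ) j - (Pi.single k 1 : ι → ℝ) j| =
      (Pi.single i 1 : ι → ℝ) j + (Pi.single k 1 : ι → ℝ) j := fun j => by
    by_cases hji : j = i
    · rw [hji]; simp [Pi.single_eq_of_ne hik]
    · by_cases hjk : j = k
      · rw [hjk]; simp [Pi.single_eq_of_ne' hik]
      · simp [Pi.single_eq_of_ne hji, Pi.single_eq_of_ne hjk]
  simp only [hdisj, sum_add_distrib, Fintype.sum_pi_single']
  norm_num

theorem sum_sum_abs_single_sub_single_const (k : ι) :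
    ∑ i, ∑ j, |(Pi.single i 1 : ι → ℝ) j - (Pi.single k 1 : ι → ℝ) j| =
      2 * (Fintype.card ι - 1) := by
  simp only [sum_abs_single_sub_single, sum_ite, sum_const_zero, filter_ne', sum_const, mem_univ,
    card_erase_of_mem, card_univ, nsmul_eq_mul, Nat.cast_sub (Fintype.card_pos_iff.mpr ⟨k⟩),
    zero_add, Nat.cast_one]
  ring

end UnitRows

theorem valDist_eq_of_forall_perm {n m : ℕ} {U U' : Matrix (Fin n) (Fin m) ℝ} {c : ℝ}
    (h : ∀ (σ : Equiv.Perm (Fin n)) (τ : Equiv.Perm (Fin m)),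
      ∑ i, ∑ j, |U i j - U' (σ i) (τ j)| = c) :
    valDist U U' = c := by
  simp only [valDist, h, ciInf_const]

theorem SEP_apply_perm {m : ℕ} (i : Fin m) (τ : Equiv.Perm (Fin m)) (j : Fin m) :
    SEP m i (τ j) = (Pi.single (τ.symm i) 1 : Fin m → ℝ) j := by
  simp [SEP, Pi.single_apply, Equiv.eq_symm_apply, eq_comm]

theorem CON_apply_perm {m : ℕ} [NeZero m] (i : Fin m) (τ : Equiv.Perm (Fin m)) (j : Fin m) :
    CON m i (τ j) = (Pi.single (τ.symm 0) 1 : Fin m → ℝ) j := by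
  simp [CON, Pi.single_apply, Equiv.eq_symm_apply, Fin.val_eq_zero_iff]

theorem sum_sum_abs_IND_sub_single {m : ℕ} [NeZero m] (f : Fin m → Fin m) :
    ∑ i, ∑ j, |IND m i j - (Pi.single (f i) 1 : Fin m → ℝ) j| = 2 * ((m : ℝ) - 1) := by
  have hm : (1 : ℝ) ≤ m := by exact_mod_cast NeZero.one_le
  have hrow : ∀ i, ∑ j, |IND m i j - (Pi.single (f i) 1 : Fin m → ℝ) j| = 2 * ((m : ℝ) - 1) / m :=
    fun i => by
      simp only [IND, Matrix.of_apply]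
      rw [sum_abs_const_sub_single (f i) (by positivity)
        (div_le_one_of_le₀ hm (by positivity)), Fintype.card_fin]
      field_simp
      ring
  rw [sum_congr rfl fun i _ => hrow i, sum_const, card_univ, Fintype.card_fin, nsmul_eq_mul]
  field_simp

/-- **The characteristic instances are mutually equidistant:** for `n = m ≥ 2`,
the pairwise valuation distances between `IND`, `SEP`, and `CON` all equal
`2(m − 1)`. -/
theorem valDist_characteristic_instances (m : ℕ) (hm : 2 ≤ m) :
    valDist (IND m) (SEP m) = 2 * ((m : ℝ) - 1) ∧
    valDist (IND m) (CON m) = 2 * ((m : ℝ) - 1) ∧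
    valDist (SEP m) (CON m) = 2 * ((m : ℝ) - 1) := by
  have : NeZero m := ⟨by omega⟩
  refine ⟨valDist_eq_of_forall_perm fun σ τ => ?_, valDist_eq_of_forall_perm fun σ τ => ?_,
    valDist_eq_of_forall_perm fun σ τ => ?_⟩
  · simp only [SEP_apply_perm]
    exact sum_sum_abs_IND_sub_single _
  · simp only [CON_apply_perm]
    exact sum_sum_abs_IND_sub_single _
  · have hSEP : ∀ i j : Fin m, SEP m i j = (Pi.single i 1 : Fin m → ℝ) j :=
      fun i j => by simpa using SEP_apply_perm i (Equiv.refl _) j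
    simp only [hSEP, CON_apply_perm, sum_sum_abs_single_sub_single_const, Fintype.card_fin]
end
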